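/- arXiv:1310.3646 — 3 statements merged into one kernel-verified Lean document; each statement's English description precedes it below -/
import Mathlib

section
/- For every trajectory x in 𝔼([0,T], S_d) and every m ≥ 1, the last-visit record trajectory R_m x belongs to D([0,T], S_m), i.e. R_m x is right-continuous with left-limits and takes values in {1,…,m}. -/
open Filter Topology Set

noncomputable section
namespace Soft

abbrev Sd := ℕ∞

noncomputable def sval (k : Sd) : ℝ := if k = ⊤ then 0 else 1 / ((k.toNat : ℝ) + 1)

noncomputable def sdist (k j : Sd) : ℝ := |sval k - sval j|

/-- left-limit filter within `[0,T]` -/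
def lf (T t : ℝ) : Filter ℝ := 𝓝[Set.Icc 0 T ∩ Set.Iio t] t

/-- right-limit filter within `[0,T]` -/
def rf (T t : ℝ) : Filter ℝ := 𝓝[Set.Icc 0 T ∩ Set.Ioi t] t

def leftLim (T : ℝ) (x : ℝ → Sd) (t : ℝ) (L : Sd) : Prop := Tendsto x (lf T t) (𝓝 L)

def rightLim (T : ℝ) (x : ℝ → Sd) (t : ℝ) (L : Sd) : Prop := Tendsto x (rf T t) (𝓝 L)

/-- the set of cluster points of `x(s)`, `s ↑ t`, is exactly the pair `{n, ∞}` -/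
def softLeftPair (T : ℝ) (x : ℝ → Sd) (t : ℝ) (n : ℕ) : Prop :=
  {L : Sd | MapClusterPt L (lf T t) x} = {(n : Sd), ⊤}

def softRightPair (T : ℝ) (x : ℝ → Sd) (t : ℝ) (n : ℕ) : Prop :=
  {L : Sd | MapClusterPt L (rf T t) x} = {(n : Sd), ⊤}

/-- `x` has a soft left-limit at `t` -/
def softLeftLim (T : ℝ) (x : ℝ → Sd) (t : ℝ) : Prop :=
  (∃ L, leftLim T x t L) ∨ ∃ n : ℕ, softLeftPair T x t n

/-- `x` is soft right-continuous at `t` -/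
def softRightCont (T : ℝ) (x : ℝ → Sd) (t : ℝ) : Prop :=
  rightLim T x t ⊤ ∨ (∃ n : ℕ, rightLim T x t (n : Sd) ∧ x t = (n : Sd)) ∨
    ∃ n : ℕ, softRightPair T x t n ∧ x t = (n : Sd)

/-- the space `𝔼([0,T], S_d)` of soft right-continuous trajectories with soft left-limits -/
def memBbE (T : ℝ) (x : ℝ → Sd) : Prop :=
  (∀ t ∈ Set.Icc 0 T, softRightCont T x t) ∧ ∀ t ∈ Set.Ioc 0 T, softLeftLim T x t

/-- time of last visit before `t` to the set `{k : P k}` (with the convention `= 0`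
if there is no such visit, since `sSup ∅ = 0` in `ℝ`) -/
def lastVisit (P : Sd → Prop) (x : ℝ → Sd) (t : ℝ) : ℝ :=
  sSup {s | s ∈ Set.Icc 0 t ∧ P (x s)}

open Classical in
/-- the record operator: the last value in `{k : P k}` visited by `x` before time `t`;
equal to the bottom state `0` before the first visit -/
noncomputable def srec (T : ℝ) (P : Sd → Prop) (x : ℝ → Sd) (t : ℝ) : Sd :=
  if ∃ s ∈ Set.Icc 0 t, P (x s) then
    if P (x (lastVisit P x t)) then x (lastVisit P x t)
    else if h : ∃ L, leftLim T x (lastVisit P x t) L then h.choose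
    else if h2 : ∃ n : ℕ, softLeftPair T x (lastVisit P x t) n then (h2.choose : Sd)
    else 0
  else 0

/-- `R_m`, the operator recording the last site visited in `S_m = {0,…,m}` -/
noncomputable def Rm (T : ℝ) (m : ℕ) (x : ℝ → Sd) : ℝ → Sd :=
  srec T (fun k => k ≤ (m : Sd)) x

/-- `R_∞`, the operator recording the last site visited in `ℕ` -/
noncomputable def Rinf (T : ℝ) (x : ℝ → Sd) : ℝ → Sd := srec T (fun k => k ≠ ⊤) x

/-- `σ_∞(t)`, the time of the last visit to `ℕ` before `t` -/
def sigmaInf (x : ℝ → Sd) (t : ℝ) : ℝ := lastVisit (fun k => k ≠ ⊤) x t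

/-- `D([0,T], S_m)`: càdlàg trajectories with values in `S_m = {0,…,m}` -/
def memD (T : ℝ) (m : ℕ) (x : ℝ → Sd) : Prop :=
  (∀ t ∈ Set.Icc 0 T, x t ≤ (m : Sd)) ∧
  (∀ t ∈ Set.Ico 0 T, rightLim T x t (x t)) ∧
  ∀ t ∈ Set.Ioc 0 T, ∃ L, leftLim T x t L

/-- `D([0,T], S_d)`: càdlàg trajectories with values in `S_d` -/
def memDd (T : ℝ) (x : ℝ → Sd) : Prop :=
  (∀ t ∈ Set.Ico 0 T, rightLim T x t (x t)) ∧
  ∀ t ∈ Set.Ioc 0 T, ∃ L, leftLim T x t L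

/-- the space `E([0,T], S_d)` -/
def memE (T : ℝ) (x : ℝ → Sd) : Prop :=
  memBbE T x ∧ x 0 ≠ ⊤ ∧
  ∀ t ∈ Set.Ioc 0 T, x t = ⊤ →
    0 < sigmaInf x t ∧ x (sigmaInf x t) = ⊤ ∧ leftLim T x (sigmaInf x t) ⊤

/-- `Λ_T(x)`, the time spent at `∞` -/
noncomputable def LambdaT (T : ℝ) (x : ℝ → Sd) : ℝ :=
  (MeasureTheory.volume {s | s ∈ Set.Icc 0 T ∧ x s = ⊤}).toReal

/-- `D^*([0,T], S_d)`: càdlàg trajectories spending no time at `∞`, continuous at `T` -/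
def memDstar (T : ℝ) (x : ℝ → Sd) : Prop :=
  memDd T x ∧ LambdaT T x = 0 ∧ leftLim T x T (x T)

/-- `E^*([0,T], S_d)`: the image of `D^*([0,T], S_d)` under `R_∞` -/
def memEstar (T : ℝ) (x : ℝ → Sd) : Prop :=
  memE T x ∧ ∃ y, memDstar T y ∧ Set.EqOn (Rinf T y) x (Set.Icc 0 T)

/-- the set `Λ` of time changes: increasing continuous bijections of `[0,T]` fixing `0, T` -/
def TimeChange (T : ℝ) (l : ℝ → ℝ) : Prop :=
  l 0 = 0 ∧ l T = T ∧ ContinuousOn l (Set.Icc 0 T) ∧ StrictMonoOn l (Set.Icc 0 T) ∧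
    Set.MapsTo l (Set.Icc 0 T) (Set.Icc 0 T)

/-- the Skorohod metric -/
noncomputable def dS (T : ℝ) (x y : ℝ → Sd) : ℝ :=
  sInf {a : ℝ | ∃ l, TimeChange T l ∧
    (∀ t ∈ Set.Icc 0 T, sdist (x t) (y (l t)) ≤ a) ∧
    ∀ s ∈ Set.Icc 0 T, ∀ t ∈ Set.Icc 0 T, s < t → |Real.log ((l t - l s) / (t - s))| ≤ a}

/-- the soft metric `d(x,y) = Σ_m 2^{-(m+1)} d_S(R_m x, R_m y)` -/
noncomputable def dE (T : ℝ) (x y : ℝ → Sd) : ℝ :=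
  ∑' m : ℕ, (1 / 2 : ℝ) ^ (m + 1) * dS T (Rm T m x) (Rm T m y)

/-- the left endpoints of the maximal intervals on which `x = j` -/
def entryPoints (T : ℝ) (j : Sd) (x : ℝ → Sd) : Set ℝ :=
  {t | t ∈ Set.Icc 0 T ∧ x t = j ∧
    (t = 0 ∨ ∀ δ > 0, ∃ s ∈ Set.Ioo (t - δ) t ∩ Set.Icc 0 T, x s ≠ j)}

/-- `N_j(x)`, the number of visits of `x` to `j` -/
noncomputable def Nvisits (T : ℝ) (j : Sd) (x : ℝ → Sd) : ℕ := (entryPoints T j x).ncard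

/-- the start of the `(l+1)`-th visit to `j` (0-indexed) -/
noncomputable def nthEntry (T : ℝ) (j : Sd) (x : ℝ → Sd) (l : ℕ) : ℝ :=
  sInf {e | e ∈ entryPoints T j x ∧ {s | s ∈ entryPoints T j x ∧ s < e}.ncard = l}

noncomputable def exitTime (T : ℝ) (j : Sd) (x : ℝ → Sd) (t : ℝ) : ℝ :=
  sInf ({s | s ∈ Set.Ioc t T ∧ x s ≠ j} ∪ {T})

/-- `T_{j,l}(x)`, the length of the `l`-th holding interval at `j` (1-indexed),
`0` if `l > N_j(x)` -/
noncomputable def holdingTime (T : ℝ) (j : Sd) (x : ℝ → Sd) (l : ℕ) : ℝ :=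
  if 1 ≤ l ∧ l ≤ Nvisits T j x then
    exitTime T j x (nthEntry T j x (l - 1)) - nthEntry T j x (l - 1)
  else 0

end Soft

/-!
On a time interval without visits to `S_m` the record `R_m x` is constant. If visits to `S_m`
accumulate at `t` from one side, the soft one-sided limit of `x` at `t` (a genuine limit, or the
cluster set `{n, ∞}`) forces all nearby visits to be to one site: any other site of the compact
set `S_m` visited infinitely often would be a further cluster point. Hence `R_m x` is eventually
constant on that side. The same argument at `σ_m(t)` shows that the recorded value lies in `S_m`.
-/

lemma MapClusterPt.eq_of_tendsto {α X : Type*} [TopologicalSpace X] [T2Space X] {F : Filter α}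
    {u : α → X} {a b : X} (ha : MapClusterPt a F u) (hb : Tendsto u F (𝓝 b)) : a = b :=
  eq_of_nhds_neBot (ClusterPt.mono ha hb)

lemma mapClusterPt_of_frequently_eq {α X : Type*} [TopologicalSpace X] {F : Filter α}
    {u : α → X} {a : X} (h : ∃ᶠ s in F, u s = a) : MapClusterPt a F u :=
  mapClusterPt_iff_frequently.2 fun _ hU => h.mono fun _ hs => hs ▸ mem_of_mem_nhds hU

namespace Soft

section OneSidedFilters

variable {T t : ℝ}

lemma lf_eq_nhdsLT (ht : t ∈ Ioc 0 T) : lf T t = 𝓝[<] t :=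
  nhdsWithin_inter_of_mem (Icc_mem_nhdsLT_of_mem ht)

lemma rf_eq_nhdsGT (ht : t ∈ Ico 0 T) : rf T t = 𝓝[>] t :=
  nhdsWithin_inter_of_mem (Icc_mem_nhdsGT_of_mem ht)

end OneSidedFilters

section ClusterPoints

variable {α : Type*} {F : Filter α} {x : α → ℕ∞} {m : ℕ}

lemma not_tendsto_top_of_frequently_le (h : ∃ᶠ s in F, x s ≤ m) : ¬ Tendsto x F (𝓝 ⊤) :=
  fun hx => (ENat.natCast_lt_top m).not_ge (le_of_tendsto_of_frequently hx h)

lemma eventually_eq_of_tendsto_of_ne_top {a : ℕ∞} (h : Tendsto x F (𝓝 a)) (ha : a ≠ ⊤) :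
    ∀ᶠ s in F, x s = a :=
  h ((ENat.isOpen_singleton ha).mem_nhds rfl)

lemma eventually_le_imp_eq_of_clusterPts_eq_pair {n : ℕ}
    (h : {L | MapClusterPt L F x} = {(n : ℕ∞), ⊤}) : ∀ᶠ s in F, x s ≤ m → x s = n := by
  by_contra hne
  have hfreq : ∃ᶠ s in F, x s ∈ Iic (m : ℕ∞) \ {(n : ℕ∞)} :=
    (not_eventually.1 hne).mono fun _ hs => Classical.not_imp.1 hs
  have hcompact : IsCompact (Iic (m : ℕ∞) \ {(n : ℕ∞)}) :=
    isClosed_Iic.isCompact.diff (ENat.isOpen_singleton (ENat.natCast_ne_top n))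
  obtain ⟨j, ⟨hjm, hjn⟩, hj⟩ := hcompact.exists_mapClusterPt_of_frequently hfreq
  have hj' : j ∈ ({(n : ℕ∞), ⊤} : Set ℕ∞) := h ▸ hj
  rcases hj' with rfl | rfl
  · exact hjn rfl
  · exact (ENat.natCast_lt_top m).not_ge hjm

end ClusterPoints

section SoftLimits

variable {T t : ℝ} {m : ℕ} {x : ℝ → Sd}

lemma exists_eventually_le_imp_eq_of_softLeftLim (hx : softLeftLim T x t) (ht : t ∈ Ioc 0 T)
    (hfreq : ∃ᶠ s in 𝓝[<] t, x s ≤ m) : ∃ a, ∀ᶠ s in 𝓝[<] t, x s ≤ m → x s = a := by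
  simp only [softLeftLim, softLeftPair, leftLim, lf_eq_nhdsLT ht] at hx
  rcases hx with ⟨L, hL⟩ | ⟨n, hn⟩
  · have hL_ne : L ≠ ⊤ := fun h => not_tendsto_top_of_frequently_le hfreq (h ▸ hL)
    exact ⟨L, (eventually_eq_of_tendsto_of_ne_top hL hL_ne).mono fun _ hs _ => hs⟩
  · exact ⟨n, eventually_le_imp_eq_of_clusterPts_eq_pair hn⟩

lemma eventually_le_imp_eq_of_softRightCont (hx : softRightCont T x t) (ht : t ∈ Ico 0 T)
    (hfreq : ∃ᶠ s in 𝓝[>] t, x s ≤ m) : ∀ᶠ s in 𝓝[>] t, x s ≤ m → x s = x t := by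
  simp only [softRightCont, softRightPair, rightLim, rf_eq_nhdsGT ht] at hx
  rcases hx with htop | ⟨n, hn, hxt⟩ | ⟨n, hn, hxt⟩
  · exact absurd htop (not_tendsto_top_of_frequently_le hfreq)
  · rw [hxt]
    exact (eventually_eq_of_tendsto_of_ne_top hn (ENat.natCast_ne_top n)).mono fun _ hs _ => hs
  · rw [hxt]
    exact eventually_le_imp_eq_of_clusterPts_eq_pair hn

end SoftLimits

section LastVisit

variable {T u s₀ : ℝ} {P : Sd → Prop} {x : ℝ → Sd}

lemma lastVisit_mem_Icc (hs₀ : s₀ ∈ Icc 0 u) (hP : P (x s₀)) : lastVisit P x u ∈ Icc s₀ u :=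
  ⟨le_csSup ⟨u, fun _ hs => hs.1.2⟩ ⟨hs₀, hP⟩, csSup_le ⟨s₀, hs₀, hP⟩ fun _ hs => hs.1.2⟩

lemma lt_lastVisit (hs₀ : s₀ ∈ Icc 0 u) (hP : P (x s₀)) (hσ : ¬ P (x (lastVisit P x u))) :
    s₀ < lastVisit P x u :=
  (lastVisit_mem_Icc hs₀ hP).1.lt_of_ne fun h => hσ (h ▸ hP)

lemma lastVisit_mem_Ioc (hs₀ : s₀ ∈ Icc 0 u) (huT : u ≤ T) (hP : P (x s₀))
    (hσ : ¬ P (x (lastVisit P x u))) : lastVisit P x u ∈ Ioc 0 T :=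
  ⟨hs₀.1.trans_lt (lt_lastVisit hs₀ hP hσ), (lastVisit_mem_Icc hs₀ hP).2.trans huT⟩

lemma frequently_nhdsLT_lastVisit (hs₀ : s₀ ∈ Icc 0 u) (hP : P (x s₀))
    (hσ : ¬ P (x (lastVisit P x u))) :
    ∃ᶠ s in 𝓝[<] lastVisit P x u, s ∈ Ioo s₀ (lastVisit P x u) ∧ P (x s) := by
  have hne : {s | s ∈ Icc 0 u ∧ P (x s)}.Nonempty := ⟨s₀, hs₀, hP⟩
  refine (nhdsLT_basis _).frequently_iff.2 fun a ha => ?_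
  obtain ⟨s, hs, has⟩ := exists_lt_of_lt_csSup hne (max_lt ha (lt_lastVisit hs₀ hP hσ))
  have hsσ_le : s ≤ lastVisit P x u := le_csSup ⟨u, fun _ hs => hs.1.2⟩ hs
  have hsσ : s < lastVisit P x u := hsσ_le.lt_of_ne fun h => hσ (h ▸ hs.2)
  exact ⟨s, ⟨(le_max_left _ _).trans_lt has, hsσ⟩, ⟨(le_max_right _ _).trans_lt has, hsσ⟩, hs.2⟩

end LastVisit

section Record

variable {T t u s₀ : ℝ} {P : Sd → Prop} {x : ℝ → Sd}

lemma srec_of_not_exists (h : ¬ ∃ s ∈ Icc 0 u, P (x s)) : srec T P x u = 0 := by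
  rw [srec, if_neg h]

lemma srec_of_lastVisit (hvisit : ∃ s ∈ Icc 0 u, P (x s)) (hσ : P (x (lastVisit P x u))) :
    srec T P x u = x (lastVisit P x u) := by
  rw [srec, if_pos hvisit, if_pos hσ]

lemma srec_eq_of_mapClusterPt (hx : memBbE T x) (hvisit : ∃ s ∈ Icc 0 u, P (x s))
    (hσP : ¬ P (x (lastVisit P x u))) (hσ : lastVisit P x u ∈ Ioc 0 T) {a : Sd} (ha : a ≠ ⊤)
    (hcl : MapClusterPt a (lf T (lastVisit P x u)) x) : srec T P x u = a := by
  rw [srec, if_pos hvisit, if_neg hσP]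
  split_ifs with hL hpair
  · exact (hcl.eq_of_tendsto hL.choose_spec).symm
  · have ha' : a ∈ ({(hpair.choose : Sd), ⊤} : Set Sd) := hpair.choose_spec ▸ hcl
    exact (ha'.resolve_right ha).symm
  · exact absurd (hx.2 _ hσ) (not_or.2 ⟨hL, hpair⟩)

lemma srec_eq_of_forall_not (htu : t ≤ u) (h : ∀ s ∈ Ioc t u, ¬ P (x s)) :
    srec T P x u = srec T P x t := by
  have hvisits : {s | s ∈ Icc 0 u ∧ P (x s)} = {s | s ∈ Icc 0 t ∧ P (x s)} :=
    ext fun s => ⟨fun ⟨⟨h0, hsu⟩, hs⟩ => ⟨⟨h0, not_lt.1 fun hts => h s ⟨hts, hsu⟩ hs⟩, hs⟩,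
      fun ⟨⟨h0, hst⟩, hs⟩ => ⟨⟨h0, hst.trans htu⟩, hs⟩⟩
  have hvisit : (∃ s ∈ Icc 0 u, P (x s)) ↔ ∃ s ∈ Icc 0 t, P (x s) :=
    ⟨fun ⟨s, hs⟩ => ⟨s, hvisits.subset hs⟩, fun ⟨s, hs⟩ => ⟨s, hvisits.symm.subset hs⟩⟩
  rw [srec, srec, lastVisit, lastVisit, hvisits, propext hvisit]

lemma srec_le_of_forall_le (hx : memBbE T x) (huT : u ≤ T) {m : ℕ} (hP : ∀ k, P k → k ≤ m) :
    srec T P x u ≤ m := by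
  by_cases hvisit : ∃ s ∈ Icc 0 u, P (x s)
  swap
  · rw [srec_of_not_exists hvisit]
    exact zero_le
  have ⟨s₀, hs₀, hv⟩ := hvisit
  by_cases hσ : P (x (lastVisit P x u))
  · rw [srec_of_lastVisit hvisit hσ]
    exact hP _ hσ
  have hσIoc := lastVisit_mem_Ioc hs₀ huT hv hσ
  obtain ⟨a, ham, hcl⟩ := (isClosed_Iic (a := (m : Sd))).isCompact.exists_mapClusterPt_of_frequently
    ((frequently_nhdsLT_lastVisit hs₀ hv hσ).mono fun _ hs => hP _ hs.2)
  rw [← lf_eq_nhdsLT hσIoc] at hcl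
  rw [srec_eq_of_mapClusterPt hx hvisit hσ hσIoc (ne_top_of_le_ne_top (ENat.natCast_ne_top m) ham)
    hcl]
  exact ham

lemma srec_eq_of_forall_imp_eq (hx : memBbE T x) (htop : ¬ P ⊤) (hs₀ : s₀ ∈ Icc 0 u)
    (huT : u ≤ T) (hv : P (x s₀)) (h : ∀ s ∈ Ioc s₀ u, P (x s) → x s = x s₀) :
    srec T P x u = x s₀ := by
  have hvisit : ∃ s ∈ Icc 0 u, P (x s) := ⟨s₀, hs₀, hv⟩
  have hσmem := lastVisit_mem_Icc hs₀ hv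
  by_cases hσ : P (x (lastVisit P x u))
  · rw [srec_of_lastVisit hvisit hσ]
    rcases hσmem.1.eq_or_lt with hσ₀ | hσ₀
    · rw [← hσ₀]
    · exact h _ ⟨hσ₀, hσmem.2⟩ hσ
  have hσIoc := lastVisit_mem_Ioc hs₀ huT hv hσ
  have hcl : MapClusterPt (x s₀) (lf T (lastVisit P x u)) x := by
    rw [lf_eq_nhdsLT hσIoc]
    exact mapClusterPt_of_frequently_eq <| (frequently_nhdsLT_lastVisit hs₀ hv hσ).mono
      fun s hs => h s ⟨hs.1.1, hs.1.2.le.trans hσmem.2⟩ hs.2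
  exact srec_eq_of_mapClusterPt hx hvisit hσ hσIoc (fun h => htop (h ▸ hv)) hcl

end Record

section RecordInSm

variable {T t : ℝ} {m : ℕ} {x : ℝ → Sd}

lemma tendsto_Rm_nhdsGT (hx : memBbE T x) (ht : t ∈ Ico 0 T) :
    Tendsto (Rm T m x) (𝓝[>] t) (𝓝 (Rm T m x t)) := by
  refine tendsto_const_nhds.congr' ?_
  by_cases hfreq : ∃ᶠ s in 𝓝[>] t, x s ≤ m
  · have hev := eventually_le_imp_eq_of_softRightCont (hx.1 t (Ico_subset_Icc_self ht)) ht hfreq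
    have hxt : x t ≤ m := by
      obtain ⟨s, hs, hst⟩ := (hfreq.and_eventually hev).exists
      exact hst hs ▸ hs
    obtain ⟨u, htu, hu⟩ := mem_nhdsGT_iff_exists_Ioc_subset.1 (hev.and (Ioo_mem_nhdsGT ht.2))
    have huT : u < T := (hu ⟨htu, le_rfl⟩).2.2
    have hRm : ∀ v ∈ Ico t u, Rm T m x v = x t := fun v hv =>
      srec_eq_of_forall_imp_eq hx (ENat.natCast_lt_top m).not_ge ⟨ht.1, hv.1⟩
        (hv.2.le.trans huT.le) hxt
        fun s hs => (hu ⟨hs.1, hs.2.trans hv.2.le⟩).1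
    filter_upwards [Ioo_mem_nhdsGT htu] with v hv
    rw [hRm t ⟨le_rfl, htu⟩, hRm v ⟨hv.1.le, hv.2⟩]
  · obtain ⟨u, htu, hu⟩ := mem_nhdsGT_iff_exists_Ioc_subset.1 (not_frequently.1 hfreq)
    filter_upwards [Ioo_mem_nhdsGT htu] with v hv
    exact (srec_eq_of_forall_not (P := (· ≤ (m : Sd))) hv.1.le
      fun s hs => hu ⟨hs.1, hs.2.trans hv.2.le⟩).symm

lemma exists_tendsto_Rm_nhdsLT (hx : memBbE T x) (ht : t ∈ Ioc 0 T) :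
    ∃ a, Tendsto (Rm T m x) (𝓝[<] t) (𝓝 a) := by
  by_cases hfreq : ∃ᶠ s in 𝓝[<] t, x s ≤ m
  · obtain ⟨a, hev⟩ := exists_eventually_le_imp_eq_of_softLeftLim (hx.2 t ht) ht hfreq
    obtain ⟨l, hlt, hl⟩ := mem_nhdsLT_iff_exists_Ico_subset.1 hev
    obtain ⟨s₀, hvs₀, hs₀⟩ := (hfreq.and_eventually (Ioo_mem_nhdsLT (max_lt hlt ht.1))).exists
    obtain ⟨hls₀, h0s₀⟩ := max_lt_iff.1 hs₀.1
    refine ⟨x s₀, tendsto_const_nhds.congr' ?_⟩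
    filter_upwards [Ioo_mem_nhdsLT hs₀.2] with v hv
    refine (srec_eq_of_forall_imp_eq hx (ENat.natCast_lt_top m).not_ge ⟨h0s₀.le, hv.1.le⟩
      (hv.2.le.trans ht.2) hvs₀ fun s hs hsm => ?_).symm
    rw [hl ⟨(hls₀.trans hs.1).le, hs.2.trans_lt hv.2⟩ hsm, hl ⟨hls₀.le, hs₀.2⟩ hvs₀]
  · obtain ⟨l, hlt, hl⟩ := mem_nhdsLT_iff_exists_Ico_subset.1 (not_frequently.1 hfreq)
    refine ⟨Rm T m x l, tendsto_const_nhds.congr' ?_⟩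
    filter_upwards [Ioo_mem_nhdsLT hlt] with v hv
    exact (srec_eq_of_forall_not (P := (· ≤ (m : Sd))) hv.1.le
      fun s hs => hl ⟨hs.1.le, hs.2.trans_lt hv.2⟩).symm

end RecordInSm

end Soft

open Soft Filter Topology in
theorem stmt4_general (T : ℝ) (x : ℝ → Soft.Sd) (hx : Soft.memBbE T x) (m : ℕ) :
    Soft.memD T m (Soft.Rm T m x) :=
  ⟨fun _ ht => srec_le_of_forall_le hx ht.2 fun _ hk => hk,
    fun t ht => by
      rw [rightLim, rf_eq_nhdsGT ht]
      exact tendsto_Rm_nhdsGT hx ht,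
    fun t ht => by
      simp only [leftLim, lf_eq_nhdsLT ht]
      exact exists_tendsto_Rm_nhdsLT hx ht⟩

open Soft Filter Topology in
/-- For every `x ∈ 𝔼([0,T], S_d)` and every `m`, the last-visit record trajectory `R_m x`
belongs to `D([0,T], S_m)`: it is càdlàg with values in `S_m`. -/
theorem stmt4 (T : ℝ) (hT : 0 < T) (x : ℝ → Soft.Sd) (hx : Soft.memBbE T x) (m : ℕ) :
    Soft.memD T m (Soft.Rm T m x) :=
  stmt4_general T x hx m
end
end

section
/- For every x in 𝔼([0,T], S_d), the trajectory R_∞ x (which records the last site in ℕ visited) belongs to E([0,T], S_d). -/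
open Filter Topology Set

noncomputable section
/-!
`R_∞ x (u)` is either `x (σ)` at the last visit `σ = σ_∞(u)` to `ℕ` or a (soft) left-limit
point of `x` at `σ`, hence a cluster point of `x` at `σ`. Where visits to `ℕ` accumulate on one
side of `t`, every closed set that eventually contains `x` on that side therefore eventually
contains `R_∞ x`, so limits and cluster sets of `x` pass to `R_∞ x`; where they do not,
`R_∞ x` is locally constant. If `R_∞ x (t) = ∞`, then `x (σ) = ∞` with left limit `∞`, visits
accumulate at `σ` from the left and `R_∞ x = ∞` on `[σ, t]`, so `σ` is also the last visit of
`R_∞ x` to `ℕ`.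
-/

section ClosureDomination

variable {α X : Type*} [TopologicalSpace X] {F : Filter α} {f g : α → X}

theorem Filter.map_le_lift'_closure_iff :
    map g F ≤ (map f F).lift' closure ↔
      ∀ C, IsClosed C → (∀ᶠ a in F, f a ∈ C) → ∀ᶠ a in F, g a ∈ C := by
  refine ⟨fun h C hC hf => ?_, fun h => le_lift'.2 fun S hS => h _ isClosed_closure ?_⟩
  · exact hC.closure_eq ▸ h (mem_lift' hf)
  · exact mem_map.1 (mem_of_superset hS subset_closure)

theorem Filter.Tendsto.of_map_le_lift'_closure [RegularSpace X] {L : X}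
    (h : map g F ≤ (map f F).lift' closure) (hf : Tendsto f F (𝓝 L)) : Tendsto g F (𝓝 L) :=
  h.trans ((lift'_mono hf le_rfl).trans_eq (lift'_nhds_closure L))

theorem MapClusterPt.of_map_le_lift'_closure {L : X}
    (h : map g F ≤ (map f F).lift' closure) (hg : MapClusterPt L F g) : MapClusterPt L F f :=
  clusterPt_lift'_closure_iff.1 (ClusterPt.mono hg h)

end ClosureDomination

theorem ENat.tendsto_or_mapClusterPt_eq_pair {α : Type*} {F : Filter α} {f : α → ℕ∞} {n : ℕ}
    (h : {L | MapClusterPt L F f} ⊆ {(n : ℕ∞), ⊤}) :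
    Tendsto f F (𝓝 ⊤) ∨ Tendsto f F (𝓝 n) ∨ {L | MapClusterPt L F f} = {(n : ℕ∞), ⊤} := by
  by_cases hn : MapClusterPt (n : ℕ∞) F f <;> by_cases htop : MapClusterPt (⊤ : ℕ∞) F f
  · exact Or.inr (Or.inr (h.antisymm (insert_subset hn (singleton_subset_iff.2 htop))))
  · refine Or.inr (Or.inl (tendsto_nhds_of_unique_mapClusterPt fun L hL => ?_))
    rcases h hL with rfl | rfl
    · rfl
    · exact absurd hL htop
  all_goals
    refine Or.inl (tendsto_nhds_of_unique_mapClusterPt fun L hL => ?_)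
    rcases h hL with rfl | rfl
    · exact absurd hL hn
    · rfl

namespace Soft

variable {T t u a : ℝ} {x y : ℝ → Sd}

theorem lf_neBot (ht : 0 < t) (htT : t ≤ T) : (lf T t).NeBot := by
  refine mem_closure_iff_nhdsWithin_neBot.1 (closure_mono (s := Ico 0 t) ?_ ?_)
  · exact fun s hs => ⟨⟨hs.1, hs.2.le.trans htT⟩, hs.2⟩
  · rw [closure_Ico ht.ne]
    exact ⟨ht.le, le_rfl⟩

theorem exists_gt_of_eventually_rf {p : ℝ → Prop} (h : ∀ᶠ s in rf T t, p s) :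
    ∃ b > t, ∀ s ∈ Icc 0 T, t < s → s < b → p s := by
  obtain ⟨b, hb, hsub⟩ := exists_Ico_subset_of_mem_nhds (eventually_nhdsWithin_iff.1 h)
    ⟨t + 1, by linarith⟩
  exact ⟨b, hb, fun s hs hts hsb => hsub ⟨hts.le, hsb⟩ ⟨hs, hts⟩⟩

theorem exists_lt_of_eventually_lf {p : ℝ → Prop} (h : ∀ᶠ s in lf T t, p s) :
    ∃ a < t, ∀ s ∈ Icc 0 T, a < s → s < t → p s := by
  obtain ⟨a, ha, hsub⟩ := exists_Ioc_subset_of_mem_nhds (eventually_nhdsWithin_iff.1 h)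
    ⟨t - 1, by linarith⟩
  exact ⟨a, ha, fun s hs has hst => hsub ⟨has, hst.le⟩ ⟨hs, hst⟩⟩

theorem softLeftLim_of_map_le_lift'_closure
    (h : map y (lf T t) ≤ (map x (lf T t)).lift' closure) (hx : softLeftLim T x t) :
    softLeftLim T y t := by
  rcases hx with ⟨L, hL⟩ | ⟨n, hn⟩
  · exact Or.inl ⟨L, hL.of_map_le_lift'_closure h⟩
  · rcases ENat.tendsto_or_mapClusterPt_eq_pair
      (fun L hL => Eq.le hn (hL.of_map_le_lift'_closure h)) with hy | hy | hy
    exacts [Or.inl ⟨⊤, hy⟩, Or.inl ⟨n, hy⟩, Or.inr ⟨n, hy⟩]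

theorem softRightCont_of_map_le_lift'_closure
    (h : map y (rf T t) ≤ (map x (rf T t)).lift' closure) (hyx : x t ≠ ⊤ → y t = x t)
    (hx : softRightCont T x t) : softRightCont T y t := by
  rcases hx with hL | ⟨n, hL, hxt⟩ | ⟨n, hn, hxt⟩
  · exact Or.inl (hL.of_map_le_lift'_closure h)
  · exact Or.inr (Or.inl ⟨n, hL.of_map_le_lift'_closure h,
      (hyx (hxt ▸ ENat.natCast_ne_top n)).trans hxt⟩)
  · have hyt : y t = n := (hyx (hxt ▸ ENat.natCast_ne_top n)).trans hxt
    rcases ENat.tendsto_or_mapClusterPt_eq_pair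
      (fun L hL => Eq.le hn (hL.of_map_le_lift'_closure h)) with hy | hy | hy
    exacts [Or.inl hy, Or.inr (Or.inl ⟨n, hy, hyt⟩), Or.inr (Or.inr ⟨n, hy, hyt⟩)]

theorem softRightCont_of_rightLim_self (h : rightLim T y t (y t)) : softRightCont T y t := by
  rcases eq_or_ne (y t) ⊤ with hyt | hyt
  · exact Or.inl (hyt ▸ h)
  · obtain ⟨n, hn⟩ := ENat.ne_top_iff_exists.1 hyt
    exact Or.inr (Or.inl ⟨n, hn ▸ h, hn.symm⟩)

theorem le_sigmaInf {s : ℝ} (hs : s ∈ Icc 0 t) (hxs : x s ≠ ⊤) : s ≤ sigmaInf x t :=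
  le_csSup ⟨t, fun _ h => h.1.2⟩ ⟨hs, hxs⟩

theorem sigmaInf_le (h : ∃ s ∈ Icc 0 t, x s ≠ ⊤) : sigmaInf x t ≤ t := by
  obtain ⟨s, hs, hxs⟩ := h
  exact csSup_le ⟨s, hs, hxs⟩ fun _ h => h.1.2

theorem Rinf_eq_self_of_ne_top (ht : 0 ≤ t) (h : x t ≠ ⊤) : Rinf T x t = x t := by
  have hσ : lastVisit (· ≠ ⊤) x t = t :=
    (sigmaInf_le ⟨t, ⟨ht, le_rfl⟩, h⟩).antisymm (le_sigmaInf ⟨ht, le_rfl⟩ h)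
  rw [Rinf, srec, if_pos ⟨t, ⟨ht, le_rfl⟩, h⟩, hσ, if_pos h]

theorem Rinf_of_forall_eq_top (h : ∀ s ∈ Icc 0 t, x s = ⊤) : Rinf T x t = 0 := by
  rw [Rinf, srec, if_neg]
  rintro ⟨s, hs, hxs⟩
  exact hxs (h s hs)

theorem Rinf_eq_of_forall_eq_top (hau : a ≤ u) (h : ∀ s ∈ Icc 0 u, a < s → x s = ⊤) :
    Rinf T x u = Rinf T x a := by
  have hvisits : {s | s ∈ Icc 0 u ∧ x s ≠ ⊤} = {s | s ∈ Icc 0 a ∧ x s ≠ ⊤} := by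
    ext s
    refine ⟨fun ⟨hs, hxs⟩ => ⟨⟨hs.1, not_lt.1 fun has => hxs (h s hs has)⟩, hxs⟩,
      fun ⟨hs, hxs⟩ => ⟨⟨hs.1, hs.2.trans hau⟩, hxs⟩⟩
  have hexists : (∃ s ∈ Icc 0 u, x s ≠ ⊤) ↔ ∃ s ∈ Icc 0 a, x s ≠ ⊤ := by
    simpa only [Set.Nonempty, mem_ofPred_eq, exists_prop] using
      (congrArg Set.Nonempty hvisits).to_iff
  have hσ : lastVisit (· ≠ ⊤) x u = lastVisit (· ≠ ⊤) x a := congrArg sSup hvisits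
  rw [Rinf, srec, srec, hσ, propext hexists]

theorem mapClusterPt_Rinf (hx : memBbE T x) (huT : u ≤ T) (hv : ∃ s ∈ Icc 0 u, x s ≠ ⊤) :
    MapClusterPt (Rinf T x u) (𝓝[Icc 0 u] (sigmaInf x u)) x := by
  obtain ⟨v, hv, hxv⟩ := hv
  set σ := sigmaInf x u
  have hvσ : v ≤ σ := le_sigmaInf hv hxv
  have hσ : σ ∈ Icc 0 u := ⟨hv.1.trans hvσ, sigmaInf_le ⟨v, hv, hxv⟩⟩
  have hlf : lf T σ ≤ 𝓝[Icc 0 u] σ :=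
    nhdsWithin_mono _ fun s hs => ⟨hs.1.1, hs.2.le.trans hσ.2⟩
  rw [Rinf, srec, if_pos ⟨v, hv, hxv⟩, show lastVisit (· ≠ ⊤) x u = σ from rfl]
  have hσ_pos (hxσ : ¬x σ ≠ ⊤) : 0 < σ :=
    hv.1.trans_lt (hvσ.lt_of_ne (by rintro rfl; exact hxv (not_not.1 hxσ)))
  split_ifs with hxσ hlim hpair
  · exact (tendsto_pure_nhds x σ).mapClusterPt.mono (pure_le_nhdsWithin hσ)
  · have : (lf T σ).NeBot := lf_neBot (hσ_pos hxσ) (hσ.2.trans huT)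
    exact (hlim.choose_spec.mapClusterPt).mono hlf
  · exact (Eq.ge hpair.choose_spec (mem_insert _ _)).mono hlf
  · exact ((hx.2 σ ⟨hσ_pos hxσ, hσ.2.trans huT⟩).elim hlim hpair).elim

theorem Rinf_mem_of_forall_mem (hx : memBbE T x) {C : Set Sd} (hC : IsClosed C) (huT : u ≤ T)
    (hv : ∃ v ∈ Icc 0 u, a < v ∧ x v ≠ ⊤) (hxC : ∀ s ∈ Icc 0 u, a < s → x s ∈ C) :
    Rinf T x u ∈ C := by
  obtain ⟨v, hv, hav, hxv⟩ := hv
  refine hC.mem_of_mapClusterPt (mapClusterPt_Rinf hx huT ⟨v, hv, hxv⟩) ?_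
  have ha : ∀ᶠ s in 𝓝[Icc 0 u] (sigmaInf x u), a < s :=
    nhdsWithin_le_nhds (eventually_gt_nhds (hav.trans_le (le_sigmaInf hv hxv)))
  filter_upwards [self_mem_nhdsWithin, ha] with s hs has using hxC s hs has

theorem map_Rinf_rf_le_lift'_closure (hx : memBbE T x) (hfreq : ∃ᶠ s in rf T t, x s ≠ ⊤) :
    map (Rinf T x) (rf T t) ≤ (map x (rf T t)).lift' closure := by
  refine map_le_lift'_closure_iff.2 fun C hC hxC => ?_
  obtain ⟨b, htb, hbC⟩ := exists_gt_of_eventually_rf hxC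
  filter_upwards [self_mem_nhdsWithin, nhdsWithin_le_nhds (eventually_lt_nhds htb)]
    with u hu hub
  obtain ⟨v, hxv, hv, hvu⟩ := (hfreq.and_eventually (eventually_mem_nhdsWithin.and
    (nhdsWithin_le_nhds (eventually_lt_nhds hu.2)))).exists
  exact Rinf_mem_of_forall_mem hx hC hu.1.2 ⟨v, ⟨hv.1.1, hvu.le⟩, hv.2, hxv⟩
    fun s hs hts => hbC s ⟨hs.1, hs.2.trans hu.1.2⟩ hts (hs.2.trans_lt hub)

theorem map_Rinf_lf_le_lift'_closure (hx : memBbE T x) (hfreq : ∃ᶠ s in lf T t, x s ≠ ⊤) :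
    map (Rinf T x) (lf T t) ≤ (map x (lf T t)).lift' closure := by
  refine map_le_lift'_closure_iff.2 fun C hC hxC => ?_
  obtain ⟨a, hat, haC⟩ := exists_lt_of_eventually_lf hxC
  obtain ⟨v, hxv, hv, hav⟩ := (hfreq.and_eventually (eventually_mem_nhdsWithin.and
    (nhdsWithin_le_nhds (eventually_gt_nhds hat)))).exists
  filter_upwards [self_mem_nhdsWithin, nhdsWithin_le_nhds (eventually_gt_nhds hv.2)]
    with u hu hvu
  exact Rinf_mem_of_forall_mem hx hC hu.1.2 ⟨v, ⟨hv.1.1, hvu.le⟩, hav, hxv⟩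
    fun s hs has => haC s ⟨hs.1, hs.2.trans hu.1.2⟩ has (hs.2.trans_lt hu.2)

theorem Rinf_eventually_eq_of_eventually_rf (h : ∀ᶠ s in rf T t, x s = ⊤) :
    ∀ᶠ u in rf T t, Rinf T x u = Rinf T x t := by
  obtain ⟨b, htb, hb⟩ := exists_gt_of_eventually_rf h
  filter_upwards [self_mem_nhdsWithin, nhdsWithin_le_nhds (eventually_lt_nhds htb)]
    with u hu hub
  exact Rinf_eq_of_forall_eq_top hu.2.le
    fun s hs hts => hb s ⟨hs.1, hs.2.trans hu.1.2⟩ hts (hs.2.trans_lt hub)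

theorem exists_Rinf_eventually_eq_of_eventually_lf (h : ∀ᶠ s in lf T t, x s = ⊤) :
    ∃ c, ∀ᶠ u in lf T t, Rinf T x u = c := by
  obtain ⟨a, hat, ha⟩ := exists_lt_of_eventually_lf h
  refine ⟨Rinf T x a, ?_⟩
  filter_upwards [self_mem_nhdsWithin, nhdsWithin_le_nhds (eventually_gt_nhds hat)]
    with u hu hau
  exact Rinf_eq_of_forall_eq_top hau.le
    fun s hs has => ha s ⟨hs.1, hs.2.trans hu.1.2⟩ has (hs.2.trans_lt hu.2)

theorem softRightCont_Rinf (hx : memBbE T x) (ht : t ∈ Icc 0 T) :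
    softRightCont T (Rinf T x) t := by
  by_cases hfreq : ∃ᶠ s in rf T t, x s ≠ ⊤
  · exact softRightCont_of_map_le_lift'_closure (map_Rinf_rf_le_lift'_closure hx hfreq)
      (Rinf_eq_self_of_ne_top ht.1) (hx.1 t ht)
  · have hconst := Rinf_eventually_eq_of_eventually_rf (by simpa using hfreq)
    exact softRightCont_of_rightLim_self
      (tendsto_const_nhds.congr' (hconst.mono fun _ h => h.symm))

theorem softLeftLim_Rinf (hx : memBbE T x) (ht : t ∈ Ioc 0 T) : softLeftLim T (Rinf T x) t := by
  by_cases hfreq : ∃ᶠ s in lf T t, x s ≠ ⊤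
  · exact softLeftLim_of_map_le_lift'_closure (map_Rinf_lf_le_lift'_closure hx hfreq) (hx.2 t ht)
  · obtain ⟨c, hc⟩ := exists_Rinf_eventually_eq_of_eventually_lf (by simpa using hfreq)
    exact Or.inl ⟨c, tendsto_const_nhds.congr' (hc.mono fun _ h => h.symm)⟩

theorem memBbE_Rinf (hx : memBbE T x) : memBbE T (Rinf T x) :=
  ⟨fun _ ht => softRightCont_Rinf hx ht, fun _ ht => softLeftLim_Rinf hx ht⟩

theorem Rinf_zero_ne_top : Rinf T x 0 ≠ ⊤ := by
  by_cases h0 : x 0 = ⊤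
  · rw [Rinf_of_forall_eq_top fun s hs => by rwa [le_antisymm hs.2 hs.1]]
    exact ENat.zero_ne_top
  · rwa [Rinf_eq_self_of_ne_top le_rfl h0]

theorem exists_visit_and_leftLim_top_of_Rinf_eq_top (h : Rinf T x t = ⊤) :
    (∃ s ∈ Icc 0 t, x s ≠ ⊤) ∧ x (sigmaInf x t) = ⊤ ∧ leftLim T x (sigmaInf x t) ⊤ := by
  rw [Rinf, srec, show lastVisit (· ≠ ⊤) x t = sigmaInf x t from rfl] at h
  split_ifs at h with hvisit hxσ hlim hpair
  · exact absurd h hxσ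
  · exact ⟨hvisit, not_not.1 hxσ, h ▸ hlim.choose_spec⟩
  all_goals simp at h

theorem sigmaInf_Rinf_spec_of_Rinf_eq_top (hx : memBbE T x) (htT : t ≤ T) (h : Rinf T x t = ⊤) :
    0 < sigmaInf (Rinf T x) t ∧ Rinf T x (sigmaInf (Rinf T x) t) = ⊤ ∧
      leftLim T (Rinf T x) (sigmaInf (Rinf T x) t) ⊤ := by
  obtain ⟨⟨v, hv, hxv⟩, hxσ, hlim⟩ := exists_visit_and_leftLim_top_of_Rinf_eq_top h
  set σ := sigmaInf x t
  have hvisit_lt (s : ℝ) (hs : s ∈ Icc 0 t) (hxs : x s ≠ ⊤) : s < σ :=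
    (le_sigmaInf hs hxs).lt_of_ne (by rintro rfl; exact hxs hxσ)
  have hσt : σ ≤ t := sigmaInf_le ⟨v, hv, hxv⟩
  have hRinf_top (w : ℝ) (hσw : σ ≤ w) (hwt : w ≤ t) : Rinf T x w = ⊤ :=
    (Rinf_eq_of_forall_eq_top hwt fun s hs hws =>
      not_not.1 fun hxs => (hvisit_lt s hs hxs).not_ge (hσw.trans hws.le)) ▸ h
  have hvisit_Rinf (s : ℝ) (hs : s ∈ Icc 0 t) (hxs : x s ≠ ⊤) : Rinf T x s ≠ ⊤ :=
    Rinf_eq_self_of_ne_top hs.1 hxs ▸ hxs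
  have hσ_eq : sigmaInf (Rinf T x) t = σ := by
    change sSup {s | s ∈ Icc 0 t ∧ Rinf T x s ≠ ⊤} = sSup {s | s ∈ Icc 0 t ∧ x s ≠ ⊤}
    refine le_antisymm (csSup_le ⟨v, hv, hvisit_Rinf v hv hxv⟩ fun w ⟨hw, hRw⟩ => ?_)
      (csSup_le ⟨v, hv, hxv⟩ fun s ⟨hs, hxs⟩ => le_sigmaInf hs (hvisit_Rinf s hs hxs))
    exact not_lt.1 fun hσw => hRw (hRinf_top w hσw.le hw.2)
  -- `σ` is the supremum of the visits to `ℕ` in `[0, t]` but not itself a visit.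
  have hfreq : ∃ᶠ s in lf T σ, x s ≠ ⊤ := by
    have hσ_mem : σ ∈ closure {s | s ∈ Icc 0 t ∧ x s ≠ ⊤} :=
      csSup_mem_closure ⟨v, hv, hxv⟩ ⟨t, fun _ h => h.1.2⟩
    refine frequently_nhdsWithin_iff.2 ((mem_closure_iff_frequently.1 hσ_mem).mono ?_)
    exact fun s ⟨hs, hxs⟩ => ⟨hxs, ⟨hs.1, hs.2.trans htT⟩, hvisit_lt s hs hxs⟩
  rw [hσ_eq]
  exact ⟨hv.1.trans_lt (hvisit_lt v hv hxv), hRinf_top σ le_rfl hσt,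
    hlim.of_map_le_lift'_closure (map_Rinf_lf_le_lift'_closure hx hfreq)⟩

end Soft

open Soft Filter Topology in
theorem stmt5_general (T : ℝ) (x : ℝ → Soft.Sd) (hx : Soft.memBbE T x) :
    Soft.memE T (Soft.Rinf T x) :=
  ⟨memBbE_Rinf hx, Rinf_zero_ne_top, fun _ ht h => sigmaInf_Rinf_spec_of_Rinf_eq_top hx ht.2 h⟩

open Soft Filter Topology in
/-- For every `x ∈ 𝔼([0,T], S_d)`, the trajectory `R_∞ x` belongs to `E([0,T], S_d)`. -/
theorem stmt5 (T : ℝ) (hT : 0 < T) (x : ℝ → Soft.Sd) (hx : Soft.memBbE T x) :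
    Soft.memE T (Soft.Rinf T x) :=
  stmt5_general T x hx
end
end

section
/- The function d(x,y) = Σ_{m≥1} 2^{−m} d_S(R_m x, R_m y), where d_S is the Skorohod metric on D([0,T], S_m), is a metric on E([0,T], S_d). -/
open Filter Topology Set

noncomputable section
/-!
Each `d_S` is a pseudometric bounded by `1`: the identity time change shows the bound, inverting
a time change gives symmetry and composing two gives the triangle inequality; the weighted sum
inherits all three. If `d(x, y) = 0` then `d_S(R_m x, R_m y) = 0` for every `m`. The records
`R_m x`, `R_m y` are right-continuous with values in `S_m`, whose distinct states are at least
`1 / (m+1)^2` apart, so time changes arbitrarily close to the identity force `R_m x = R_m y`.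
Finally the records determine the path: where `x t` is finite, `R_m x t = x t` for `m ≥ x t`;
where `x t = ∞`, the path entered `∞` by escaping to infinity from the left of `σ_∞(t)`, so
`R_m x t` exceeds every finite level for suitable `m`.
-/

namespace Soft

lemma sval_nonneg (k : Sd) : 0 ≤ sval k := by
  unfold sval; split <;> positivity

lemma sval_le_one (k : Sd) : sval k ≤ 1 := by
  unfold sval; split
  · exact zero_le_one
  · exact div_le_one_of_le₀ (by linarith [(k.toNat).cast_nonneg (α := ℝ)]) (by positivity)

lemma sval_natCast (n : ℕ) : sval n = 1 / ((n : ℝ) + 1) := by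
  simp [sval]

lemma sdist_nonneg (k j : Sd) : 0 ≤ sdist k j := abs_nonneg _

lemma sdist_le_one (k j : Sd) : sdist k j ≤ 1 := by
  rw [sdist, abs_le]
  constructor <;> linarith [sval_nonneg k, sval_nonneg j, sval_le_one k, sval_le_one j]

lemma sdist_self (k : Sd) : sdist k k = 0 := by simp [sdist]

lemma sdist_comm (k j : Sd) : sdist k j = sdist j k := abs_sub_comm _ _

lemma sdist_triangle (k j l : Sd) : sdist k l ≤ sdist k j + sdist j l := abs_sub_le _ _ _

lemma eq_of_sdist_lt {m : ℕ} {k j : Sd} (hk : k ≤ m) (hj : j ≤ m)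
    (h : sdist k j < ((m + 1 : ℝ) ^ 2)⁻¹) : k = j := by
  lift k to ℕ using ne_top_of_le_ne_top (ENat.natCast_ne_top m) hk
  lift j to ℕ using ne_top_of_le_ne_top (ENat.natCast_ne_top m) hj
  norm_cast at hk hj ⊢
  by_contra hne
  have hgap : (1 : ℝ) ≤ |(j : ℝ) - k| := by
    have : (1 : ℤ) ≤ |(j : ℤ) - k| := Int.one_le_abs (sub_ne_zero.mpr (by omega))
    exact_mod_cast this
  have hden : ((k : ℝ) + 1) * ((j : ℝ) + 1) ≤ (m + 1 : ℝ) ^ 2 := by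
    have : (k : ℝ) ≤ m := by exact_mod_cast hk
    have : (j : ℝ) ≤ m := by exact_mod_cast hj
    nlinarith
  have hsd : sdist k j = |(j : ℝ) - k| / (((k : ℝ) + 1) * ((j : ℝ) + 1)) := by
    rw [sdist, sval_natCast, sval_natCast, div_sub_div _ _ (by positivity) (by positivity),
      abs_div, abs_of_pos (by positivity : (0 : ℝ) < ((k : ℝ) + 1) * ((j : ℝ) + 1))]
    ring_nf
  have : ((m + 1 : ℝ) ^ 2)⁻¹ ≤ sdist k j := by
    rw [hsd, inv_eq_one_div]
    calc 1 / (m + 1 : ℝ) ^ 2 ≤ 1 / (((k : ℝ) + 1) * ((j : ℝ) + 1)) :=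
          one_div_le_one_div_of_le (by positivity) hden
      _ ≤ _ := div_le_div_of_nonneg_right hgap (by positivity)
  linarith

/-- `‖l‖° ≤ a`, in the notation of the Skorohod metric. -/
def LogSlopeLE (T : ℝ) (l : ℝ → ℝ) (a : ℝ) : Prop :=
  ∀ s ∈ Icc 0 T, ∀ t ∈ Icc 0 T, s < t → |Real.log ((l t - l s) / (t - s))| ≤ a

def skorohodBounds (T : ℝ) (x y : ℝ → Sd) : Set ℝ :=
  {a | ∃ l, TimeChange T l ∧ (∀ t ∈ Icc 0 T, sdist (x t) (y (l t)) ≤ a) ∧ LogSlopeLE T l a}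

lemma dS_eq_sInf (T : ℝ) (x y : ℝ → Sd) : dS T x y = sInf (skorohodBounds T x y) := rfl

lemma timeChange_id (T : ℝ) : TimeChange T id :=
  ⟨rfl, rfl, continuousOn_id, strictMonoOn_id, mapsTo_id _⟩

lemma logSlopeLE_id {T a : ℝ} (ha : 0 ≤ a) : LogSlopeLE T id a := by
  intro s _ t _ hst
  rwa [id, id, div_self (sub_pos.mpr hst).ne', Real.log_one, abs_zero]

lemma mem_skorohodBounds_of_one_le {T a : ℝ} (x y : ℝ → Sd) (ha : 1 ≤ a) :
    a ∈ skorohodBounds T x y :=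
  ⟨id, timeChange_id T, fun _ _ => (sdist_le_one _ _).trans ha, logSlopeLE_id (by linarith)⟩

lemma skorohodBounds_nonempty (T : ℝ) (x y : ℝ → Sd) : (skorohodBounds T x y).Nonempty :=
  ⟨1, mem_skorohodBounds_of_one_le x y le_rfl⟩

lemma nonneg_of_mem_skorohodBounds {T a : ℝ} (hT : 0 ≤ T) {x y : ℝ → Sd}
    (ha : a ∈ skorohodBounds T x y) : 0 ≤ a := by
  obtain ⟨l, -, hd, -⟩ := ha
  exact (sdist_nonneg _ _).trans (hd T ⟨hT, le_rfl⟩)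

lemma bddBelow_skorohodBounds {T : ℝ} (hT : 0 ≤ T) (x y : ℝ → Sd) :
    BddBelow (skorohodBounds T x y) :=
  ⟨0, fun _ ha => nonneg_of_mem_skorohodBounds hT ha⟩

lemma dS_nonneg {T : ℝ} (hT : 0 ≤ T) (x y : ℝ → Sd) : 0 ≤ dS T x y :=
  le_csInf (skorohodBounds_nonempty T x y) fun _ ha => nonneg_of_mem_skorohodBounds hT ha

lemma dS_le_one {T : ℝ} (hT : 0 ≤ T) (x y : ℝ → Sd) : dS T x y ≤ 1 :=
  csInf_le (bddBelow_skorohodBounds hT x y) (mem_skorohodBounds_of_one_le x y le_rfl)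

lemma dS_eq_zero_of_eqOn {T : ℝ} (hT : 0 ≤ T) {x y : ℝ → Sd} (h : EqOn x y (Icc 0 T)) :
    dS T x y = 0 := by
  refine le_antisymm (csInf_le (bddBelow_skorohodBounds hT x y) ?_) (dS_nonneg hT x y)
  exact ⟨id, timeChange_id T, fun t ht => by rw [id, ← h ht, sdist_self], logSlopeLE_id le_rfl⟩

lemma TimeChange.exists_rightInverse {T : ℝ} (hT : 0 ≤ T) {l : ℝ → ℝ} (hl : TimeChange T l) :
    ∃ g, TimeChange T g ∧ ∀ u ∈ Icc 0 T, l (g u) = u := by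
  obtain ⟨hl0, hlT, hlc, hlm, hlM⟩ := hl
  have hsurj : SurjOn l (Icc 0 T) (Icc 0 T) := by
    have := intermediate_value_Icc hT hlc
    rwa [hl0, hlT] at this
  let e : Icc 0 T ≃o Icc 0 T := StrictMono.orderIsoOfSurjective hlM.restrict
    (fun u v h => hlm u.2 v.2 h) fun u => by
      obtain ⟨v, hv, hvu⟩ := hsurj u.2
      exact ⟨⟨v, hv⟩, Subtype.ext hvu⟩
  have hle : ∀ u, l (e.symm u) = u := fun u => congrArg Subtype.val (e.apply_symm_apply u)
  have hfix : ∀ u (hu : u ∈ Icc 0 T), l u = u → IccExtend hT (fun u => (e.symm u : ℝ)) u = u := by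
    intro u hu h
    have he : e ⟨u, hu⟩ = ⟨u, hu⟩ := Subtype.ext h
    rw [IccExtend_of_mem _ _ hu, ← he, e.symm_apply_apply]
  refine ⟨IccExtend hT fun u => (e.symm u : ℝ), ⟨?_, ?_, ?_, ?_, ?_⟩, ?_⟩
  · exact hfix 0 ⟨le_rfl, hT⟩ hl0
  · exact hfix T ⟨hT, le_rfl⟩ hlT
  · exact (continuous_subtype_val.comp e.symm.continuous).Icc_extend'.continuousOn
  · intro u hu v hv huv
    simp only [IccExtend_of_mem _ _ hu, IccExtend_of_mem _ _ hv]
    exact e.symm.strictMono huv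
  · exact fun u _ => (e.symm _).2
  · intro u hu
    rw [IccExtend_of_mem _ _ hu, hle]

lemma TimeChange.comp {T : ℝ} {l₁ l₂ : ℝ → ℝ} (hl₂ : TimeChange T l₂) (hl₁ : TimeChange T l₁) :
    TimeChange T (l₂ ∘ l₁) := by
  obtain ⟨h₁0, h₁T, h₁c, h₁m, h₁M⟩ := hl₁
  obtain ⟨h₂0, h₂T, h₂c, h₂m, h₂M⟩ := hl₂
  exact ⟨by simp [h₁0, h₂0], by simp [h₁T, h₂T], h₂c.comp h₁c h₁M, h₂m.comp h₁m h₁M,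
    h₂M.comp h₁M⟩

lemma LogSlopeLE.comp {T a b : ℝ} {l₁ l₂ : ℝ → ℝ} (h₂ : LogSlopeLE T l₂ b)
    (h₁ : LogSlopeLE T l₁ a) (hl₂ : TimeChange T l₂) (hl₁ : TimeChange T l₁) :
    LogSlopeLE T (l₂ ∘ l₁) (a + b) := by
  intro s hs t ht hst
  have hs₁ := hl₁.2.2.2.2 hs
  have ht₁ := hl₁.2.2.2.2 ht
  have h₁lt : l₁ s < l₁ t := hl₁.2.2.2.1 hs ht hst
  have h₂lt : l₂ (l₁ s) < l₂ (l₁ t) := hl₂.2.2.2.1 hs₁ ht₁ h₁lt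
  have hsplit : (l₂ (l₁ t) - l₂ (l₁ s)) / (t - s)
      = (l₂ (l₁ t) - l₂ (l₁ s)) / (l₁ t - l₁ s) * ((l₁ t - l₁ s) / (t - s)) := by
    field_simp [(sub_pos.mpr h₁lt).ne']
  rw [Function.comp_apply, Function.comp_apply, hsplit,
    Real.log_mul (div_pos (sub_pos.mpr h₂lt) (sub_pos.mpr h₁lt)).ne'
      (div_pos (sub_pos.mpr h₁lt) (sub_pos.mpr hst)).ne', add_comm a b]
  exact (abs_add_le _ _).trans (add_le_add (h₂ _ hs₁ _ ht₁ h₁lt) (h₁ s hs t ht hst))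

lemma add_mem_skorohodBounds {T a b : ℝ} {x y z : ℝ → Sd} (ha : a ∈ skorohodBounds T x y)
    (hb : b ∈ skorohodBounds T y z) : a + b ∈ skorohodBounds T x z := by
  obtain ⟨l₁, hl₁, hd₁, hg₁⟩ := ha
  obtain ⟨l₂, hl₂, hd₂, hg₂⟩ := hb
  refine ⟨l₂ ∘ l₁, hl₂.comp hl₁, fun t ht => ?_, hg₂.comp hg₁ hl₂ hl₁⟩
  exact (sdist_triangle _ (y (l₁ t)) _).trans
    (add_le_add (hd₁ t ht) (hd₂ (l₁ t) (hl₁.2.2.2.2 ht)))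

lemma mem_skorohodBounds_symm {T a : ℝ} (hT : 0 ≤ T) {x y : ℝ → Sd}
    (ha : a ∈ skorohodBounds T x y) : a ∈ skorohodBounds T y x := by
  obtain ⟨l, hl, hd, hg⟩ := ha
  obtain ⟨g, hg_tc, hlg⟩ := hl.exists_rightInverse hT
  have hgM := hg_tc.2.2.2.2
  refine ⟨g, hg_tc, fun t ht => ?_, fun s hs t ht hst => ?_⟩
  · rw [sdist_comm, ← congrArg y (hlg t ht)]
    exact hd (g t) (hgM ht)
  · have hlt : g s < g t := hg_tc.2.2.2.1 hs ht hst
    have := hg (g s) (hgM hs) (g t) (hgM ht) hlt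
    rwa [hlg s hs, hlg t ht, ← abs_neg, ← Real.log_inv, inv_div] at this

lemma dS_comm {T : ℝ} (hT : 0 ≤ T) (x y : ℝ → Sd) : dS T x y = dS T y x := by
  rw [dS_eq_sInf, dS_eq_sInf]
  congr 1
  ext a
  exact ⟨mem_skorohodBounds_symm hT, mem_skorohodBounds_symm hT⟩

lemma dS_triangle {T : ℝ} (hT : 0 ≤ T) (x y z : ℝ → Sd) :
    dS T x z ≤ dS T x y + dS T y z := by
  rw [dS_eq_sInf, dS_eq_sInf, dS_eq_sInf,
    ← csInf_add (skorohodBounds_nonempty T x y) (bddBelow_skorohodBounds hT x y)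
      (skorohodBounds_nonempty T y z) (bddBelow_skorohodBounds hT y z)]
  exact csInf_le_csInf (bddBelow_skorohodBounds hT x z)
    ((skorohodBounds_nonempty T x y).add (skorohodBounds_nonempty T y z))
    (Set.add_subset_iff.mpr fun _ ha _ hb => add_mem_skorohodBounds ha hb)

lemma exists_forall_Ioo_of_eventually_rf {T t : ℝ} {Q : ℝ → Prop} (h : ∀ᶠ s in rf T t, Q s) :
    ∃ δ > 0, ∀ s ∈ Icc 0 T, s ∈ Ioo t (t + δ) → Q s := by
  obtain ⟨δ, hδ, hsub⟩ := Metric.mem_nhdsWithin_iff.mp h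
  refine ⟨δ, hδ, fun s hs hst => hsub ⟨?_, hs, hst.1⟩⟩
  rw [Metric.mem_ball, Real.dist_eq, abs_lt]
  constructor <;> linarith [hst.1, hst.2]

lemma exists_forall_Ioo_of_eventually_lf {T t : ℝ} {Q : ℝ → Prop} (h : ∀ᶠ s in lf T t, Q s) :
    ∃ δ > 0, ∀ s ∈ Icc 0 T, s ∈ Ioo (t - δ) t → Q s := by
  obtain ⟨δ, hδ, hsub⟩ := Metric.mem_nhdsWithin_iff.mp h
  refine ⟨δ, hδ, fun s hs hst => hsub ⟨?_, hs, hst.2⟩⟩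
  rw [Metric.mem_ball, Real.dist_eq, abs_lt]
  constructor <;> linarith [hst.1, hst.2]

lemma abs_sub_one_le_of_abs_log_le {r a : ℝ} (hr : 0 < r) (h : |Real.log r| ≤ a) :
    |r - 1| ≤ Real.exp a - 1 := by
  obtain ⟨hlo, hhi⟩ := abs_le.mp h
  have hup : r ≤ Real.exp a := (Real.log_le_iff_le_exp hr).mp hhi
  have hdown : Real.exp (-a) ≤ r := (Real.le_log_iff_exp_le hr).mp (by linarith)
  have := Real.add_one_le_exp a
  have := Real.add_one_le_exp (-a)
  rw [abs_le]
  constructor <;> linarith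

lemma TimeChange.abs_sub_le {T a : ℝ} {l : ℝ → ℝ} (hl : TimeChange T l) (hg : LogSlopeLE T l a)
    {u : ℝ} (hu : u ∈ Ioc 0 T) : |l u - u| ≤ u * (Real.exp a - 1) := by
  have hu0 : (0 : ℝ) ∈ Icc 0 T := ⟨le_rfl, hu.1.le.trans hu.2⟩
  have hlu : 0 < l u := hl.1 ▸ hl.2.2.2.1 hu0 (Ioc_subset_Icc_self hu) hu.1
  have hlog := hg 0 hu0 u (Ioc_subset_Icc_self hu) hu.1
  rw [hl.1, sub_zero, sub_zero] at hlog
  have hsplit : l u - u = u * (l u / u - 1) := by field_simp [hu.1.ne']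
  rw [hsplit, abs_mul, abs_of_pos hu.1]
  exact mul_le_mul_of_nonneg_left (abs_sub_one_le_of_abs_log_le (div_pos hlu hu.1) hlog) hu.1.le

lemma exists_timeChange_of_dS_eq_zero {T ε γ : ℝ} (hT : 0 < T) {x y : ℝ → Sd}
    (h : dS T x y = 0) (hε : 0 < ε) (hγ : 0 < γ) :
    ∃ l, TimeChange T l ∧ (∀ t ∈ Icc 0 T, sdist (x t) (y (l t)) < ε) ∧
      ∀ u ∈ Ioc 0 T, |l u - u| < γ := by
  have hlog : 0 < Real.log (1 + γ / T) := Real.log_pos (lt_add_of_pos_right 1 (div_pos hγ hT))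
  obtain ⟨a, ha, haε⟩ := exists_lt_of_csInf_lt (skorohodBounds_nonempty T x y)
    (show dS T x y < min ε (Real.log (1 + γ / T)) from h ▸ lt_min hε hlog)
  have ha0 := nonneg_of_mem_skorohodBounds hT.le ha
  obtain ⟨l, hl, hd, hg⟩ := ha
  have hexp : Real.exp a < 1 + γ / T :=
    (Real.lt_log_iff_exp_lt (by positivity)).mp (haε.trans_le (min_le_right _ _))
  refine ⟨l, hl, fun t ht => (hd t ht).trans_lt (haε.trans_le (min_le_left _ _)), fun u hu => ?_⟩
  calc |l u - u| ≤ u * (Real.exp a - 1) := hl.abs_sub_le hg hu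
    _ ≤ T * (Real.exp a - 1) :=
        mul_le_mul_of_nonneg_right hu.2 (by linarith [Real.add_one_le_exp a])
    _ < T * (γ / T) := mul_lt_mul_of_pos_left (by linarith) hT
    _ = γ := by field_simp

lemma eventually_eq_of_tendsto_ne_top {α : Type*} {F : Filter α} {f : α → Sd} {k : Sd}
    (hk : k ≠ ⊤) (h : Tendsto f F (𝓝 k)) : ∀ᶠ s in F, f s = k :=
  tendsto_pure.mp (ENat.nhds_eq_pure hk ▸ h)

lemma eqOn_of_dS_eq_zero {T : ℝ} (hT : 0 < T) {m : ℕ} {u v : ℝ → Sd}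
    (hum : ∀ t ∈ Icc 0 T, u t ≤ m) (hvm : ∀ t ∈ Icc 0 T, v t ≤ m)
    (hur : ∀ t ∈ Ico 0 T, rightLim T u t (u t)) (hvr : ∀ t ∈ Ico 0 T, rightLim T v t (v t))
    (h : dS T u v = 0) : EqOn u v (Icc 0 T) := by
  have hres : (0 : ℝ) < ((m + 1 : ℝ) ^ 2)⁻¹ := by positivity
  intro t ht
  rcases ht.2.eq_or_lt with rfl | htT
  · obtain ⟨l, hl, hd, -⟩ := exists_timeChange_of_dS_eq_zero hT h hres one_pos
    have hdT := hd t ht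
    rw [hl.2.1] at hdT
    exact eq_of_sdist_lt (hum t ht) (hvm t ht) hdT
  have hne : ∀ {w : ℝ → Sd}, (∀ t ∈ Icc 0 T, w t ≤ m) → w t ≠ ⊤ := fun hw =>
    ne_top_of_le_ne_top (ENat.natCast_ne_top m) (hw t ht)
  obtain ⟨δ, hδ, hconst⟩ := exists_forall_Ioo_of_eventually_rf
    ((eventually_eq_of_tendsto_ne_top (hne hum) (hur t ⟨ht.1, htT⟩)).and
      (eventually_eq_of_tendsto_ne_top (hne hvm) (hvr t ⟨ht.1, htT⟩)))
  obtain ⟨s, hts, hsδ, hs_lt⟩ : ∃ s, t < s ∧ s < t + δ ∧ s < T :=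
    ⟨t + min δ (T - t) / 2, by linarith [lt_min hδ (sub_pos.mpr htT)],
      by linarith [min_le_left δ (T - t)], by linarith [min_le_right δ (T - t)]⟩
  have hsT : s ∈ Icc 0 T := ⟨by linarith [ht.1], hs_lt.le⟩
  obtain ⟨l, hl, hd, hclose⟩ := exists_timeChange_of_dS_eq_zero hT h hres
    (lt_min (sub_pos.mpr hts) (sub_pos.mpr hsδ))
  have hls := abs_lt.mp (hclose s ⟨by linarith [ht.1], hsT.2⟩)
  have hls₁ := min_le_left (s - t) (t + δ - s)
  have hls₂ := min_le_right (s - t) (t + δ - s)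
  have hlsI : l s ∈ Ioo t (t + δ) := ⟨by linarith [hls.1], by linarith [hls.2]⟩
  calc u t = u s := ((hconst s hsT ⟨hts, hsδ⟩).1).symm
    _ = v (l s) := eq_of_sdist_lt (hum s hsT) (hvm _ (hl.2.2.2.2 hsT)) (hd s hsT)
    _ = v t := (hconst (l s) (hl.2.2.2.2 hsT) hlsI).2

section Record

variable {T t : ℝ} {P : Sd → Prop} {x : ℝ → Sd}

lemma lastVisit_mem_Icc_s9 (hex : ∃ s ∈ Icc 0 t, P (x s)) : lastVisit P x t ∈ Icc 0 t := by
  obtain ⟨s, hs, hPs⟩ := hex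
  exact ⟨hs.1.trans (le_csSup ⟨t, fun _ hu => hu.1.2⟩ ⟨hs, hPs⟩),
    csSup_le ⟨s, hs, hPs⟩ fun _ hu => hu.1.2⟩

lemma le_lastVisit {s : ℝ} (hs : s ∈ Icc 0 t) (hPs : P (x s)) : s ≤ lastVisit P x t :=
  le_csSup ⟨t, fun _ hu => hu.1.2⟩ ⟨hs, hPs⟩

lemma lastVisit_eq_self (ht : 0 ≤ t) (hP : P (x t)) : lastVisit P x t = t :=
  le_antisymm (lastVisit_mem_Icc_s9 ⟨t, ⟨ht, le_rfl⟩, hP⟩).2 (le_lastVisit ⟨ht, le_rfl⟩ hP)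

lemma frequently_visits_lf (htT : t ≤ T) (hex : ∃ s ∈ Icc 0 t, P (x s))
    (hP : ¬ P (x (lastVisit P x t))) :
    ∃ᶠ s in lf T (lastVisit P x t), P (x s) ∧ s ∈ Icc 0 t := by
  rw [Filter.frequently_iff]
  intro V hV
  obtain ⟨ε, hε, hsub⟩ := Metric.mem_nhdsWithin_iff.mp hV
  obtain ⟨s, ⟨hs, hPs⟩, hεs⟩ := exists_lt_of_lt_csSup hex
    (sub_lt_self (lastVisit P x t) hε)
  have hsτ : s < lastVisit P x t :=
    (le_lastVisit hs hPs).lt_of_ne fun h => hP (h ▸ hPs)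
  refine ⟨s, hsub ⟨?_, ⟨hs.1, hs.2.trans htT⟩, hsτ⟩, hPs, hs⟩
  rw [Metric.mem_ball, Real.dist_eq, abs_lt]
  constructor <;> linarith

lemma srec_eq_self (ht : 0 ≤ t) (hP : P (x t)) : srec T P x t = x t := by
  rw [srec, if_pos ⟨t, ⟨ht, le_rfl⟩, hP⟩, lastVisit_eq_self ht hP, if_pos hP]

lemma Rm_eq_self {m : ℕ} (ht : 0 ≤ t) (hx : x t ≤ m) : Rm T m x t = x t :=
  srec_eq_self ht hx

lemma srec_congr {y : ℝ → Sd} (ht : t ∈ Icc 0 T) (hxy : EqOn x y (Icc 0 T)) :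
    srec T P x t = srec T P y t := by
  have hsub : Icc 0 t ⊆ Icc 0 T := Icc_subset_Icc_right ht.2
  have hvisits : {s | s ∈ Icc 0 t ∧ P (x s)} = {s | s ∈ Icc 0 t ∧ P (y s)} := by
    ext s
    exact and_congr_right fun hs => by rw [hxy (hsub hs)]
  have hex : (∃ s ∈ Icc 0 t, P (x s)) = ∃ s ∈ Icc 0 t, P (y s) := congrArg Set.Nonempty hvisits
  have hlv : lastVisit P x t = lastVisit P y t := by rw [lastVisit, lastVisit, hvisits]
  by_cases hexx : ∃ s ∈ Icc 0 t, P (x s)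
  swap
  · rw [srec, srec, if_neg hexx, if_neg (hex ▸ hexx)]
  set τ := lastVisit P y t
  have hτ : x τ = y τ := hxy (hsub (hlv ▸ lastVisit_mem_Icc_s9 hexx))
  have hmap : map x (lf T τ) = map y (lf T τ) :=
    map_congr (mem_of_superset self_mem_nhdsWithin fun s hs => hxy hs.1)
  have hL : leftLim T x τ = leftLim T y τ := by
    funext L; simp only [leftLim, Tendsto, hmap]
  have hpair : softLeftPair T x τ = softLeftPair T y τ := by
    funext n; simp only [softLeftPair, MapClusterPt, hmap]
  rw [srec, srec, hex, hlv, hτ, hL, hpair]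

lemma srec_eq_of_no_visits {s : ℝ} (hts : t ≤ s) (hno : ∀ u ∈ Ioc t s, ¬ P (x u)) :
    srec T P x s = srec T P x t := by
  have hvisits : {u | u ∈ Icc 0 s ∧ P (x u)} = {u | u ∈ Icc 0 t ∧ P (x u)} := by
    ext u
    refine ⟨fun ⟨hu, hPu⟩ => ⟨⟨hu.1, not_lt.mp fun htu => hno u ⟨htu, hu.2⟩ hPu⟩, hPu⟩,
      fun ⟨hu, hPu⟩ => ⟨⟨hu.1, hu.2.trans hts⟩, hPu⟩⟩
  have hex : (∃ u ∈ Icc 0 s, P (x u)) = ∃ u ∈ Icc 0 t, P (x u) :=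
    congrArg Set.Nonempty hvisits
  rw [srec, srec, lastVisit, hvisits, hex, ← lastVisit]

lemma srec_mem_of_frequently {C : Set Sd} (hC : IsCompact C) (hCtop : ⊤ ∉ C)
    (hex : ∃ s ∈ Icc 0 t, P (x s)) (hP : ¬ P (x (lastVisit P x t)))
    (hsoft : softLeftLim T x (lastVisit P x t))
    (hfreq : ∃ᶠ s in lf T (lastVisit P x t), x s ∈ C) : srec T P x t ∈ C := by
  obtain ⟨k, hkC, hk⟩ := hC.exists_mapClusterPt_of_frequently hfreq
  rw [srec, if_pos hex, if_neg hP]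
  split_ifs with hL hpair
  · exact hC.isClosed.mem_of_frequently_of_tendsto hfreq hL.choose_spec
  · have hk' : k ∈ ({(hpair.choose : Sd), ⊤} : Set Sd) := hpair.choose_spec ▸ hk
    rcases hk' with h | h
    · exact h ▸ hkC
    · exact absurd (h ▸ hkC) hCtop
  · exact (hsoft.elim hL hpair).elim

lemma srec_mem_of_visits_mem {a : ℝ} {C : Set Sd} (hx : ∀ s ∈ Ioc 0 T, softLeftLim T x s)
    (htT : t ≤ T) (ha : 0 ≤ a) (hC : IsCompact C) (hCtop : ⊤ ∉ C)
    (hex : ∃ s ∈ Icc a t, P (x s)) (hvis : ∀ s ∈ Icc a t, P (x s) → x s ∈ C) :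
    srec T P x t ∈ C := by
  obtain ⟨s₁, hs₁, hPs₁⟩ := hex
  have hex₀ : ∃ s ∈ Icc 0 t, P (x s) := ⟨s₁, ⟨ha.trans hs₁.1, hs₁.2⟩, hPs₁⟩
  have hτ := lastVisit_mem_Icc_s9 hex₀
  have hs₁τ : s₁ ≤ lastVisit P x t := le_lastVisit ⟨ha.trans hs₁.1, hs₁.2⟩ hPs₁
  by_cases hP : P (x (lastVisit P x t))
  · rw [srec, if_pos hex₀, if_pos hP]
    exact hvis _ ⟨hs₁.1.trans hs₁τ, hτ.2⟩ hP
  have haτ : a < lastVisit P x t := (hs₁.1.trans hs₁τ).lt_of_ne fun h =>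
    hP (le_antisymm hs₁τ (h ▸ hs₁.1) ▸ hPs₁)
  refine srec_mem_of_frequently hC hCtop hex₀ hP (hx _ ⟨ha.trans_lt haτ, hτ.2.trans htT⟩) ?_
  have hev : ∀ᶠ s in lf T (lastVisit P x t), a < s :=
    mem_nhdsWithin_of_mem_nhds (Ioi_mem_nhds haτ)
  exact ((frequently_visits_lf htT hex₀ hP).and_eventually hev).mono fun s hs =>
    hvis s ⟨hs.2.le, hs.1.2.2⟩ hs.1.1

end Record

section RecordProcess

variable {T t : ℝ} {m : ℕ} {x : ℝ → Sd}

lemma eventually_forall_Ioc_of_eventually_rf {Q : ℝ → Prop} (ht : 0 ≤ t)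
    (h : ∀ᶠ s in rf T t, Q s) : ∀ᶠ s in rf T t, s ∈ Icc 0 T ∧ t < s ∧ ∀ u ∈ Ioc t s, Q u := by
  obtain ⟨δ, hδ, hQ⟩ := exists_forall_Ioo_of_eventually_rf h
  have hlt : ∀ᶠ s in rf T t, s < t + δ :=
    mem_nhdsWithin_of_mem_nhds (Iio_mem_nhds (lt_add_of_pos_right t hδ))
  filter_upwards [self_mem_nhdsWithin, hlt] with s hs hsδ
  exact ⟨hs.1, hs.2, fun u hu =>
    hQ u ⟨ht.trans hu.1.le, hu.2.trans hs.1.2⟩ ⟨hu.1, hu.2.trans_lt hsδ⟩⟩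

lemma Rm_le (hx : memBbE T x) (ht : t ∈ Icc 0 T) : Rm T m x t ≤ m := by
  by_cases hex : ∃ s ∈ Icc 0 t, x s ≤ m
  · exact (srec_mem_of_visits_mem (C := Icc 0 m) hx.2 ht.2 le_rfl isCompact_Icc (by simp) hex
      fun _ _ h => ⟨zero_le, h⟩).2
  · rw [Rm, srec, if_neg hex]
    exact zero_le

lemma eventually_Rm_eq_of_eventually_lt (ht : 0 ≤ t) (h : ∀ᶠ s in rf T t, (m : Sd) < x s) :
    ∀ᶠ s in rf T t, Rm T m x s = Rm T m x t := by
  filter_upwards [eventually_forall_Ioc_of_eventually_rf ht h] with s hs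
  exact srec_eq_of_no_visits hs.2.1.le fun u hu => not_le.mpr (hs.2.2 u hu)

lemma eventually_Rm_eq_of_eventually_eq_or_lt {n : ℕ} (hx : memBbE T x) (ht : 0 ≤ t)
    (hxt : x t = n) (hnm : n ≤ m) (h : ∀ᶠ s in rf T t, x s = n ∨ (m : Sd) < x s) :
    ∀ᶠ s in rf T t, Rm T m x s = n := by
  filter_upwards [eventually_forall_Ioc_of_eventually_rf ht h] with s hs'
  obtain ⟨hs, hts, hxs⟩ := hs'
  refine srec_mem_of_visits_mem (C := {(n : Sd)}) hx.2 hs.2 ht isCompact_singleton (by simp)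
    ⟨t, ⟨le_rfl, hts.le⟩, by rw [hxt]; exact_mod_cast hnm⟩ fun u hu hxu => ?_
  rcases hu.1.eq_or_lt with rfl | htu
  · exact hxt
  · exact (hxs u ⟨htu, hu.2⟩).resolve_right (not_lt.mpr hxu)

lemma eventually_eq_or_lt_of_softRightPair {n : ℕ} (h : softRightPair T x t n) :
    ∀ᶠ s in rf T t, x s = n ∨ (m : Sd) < x s := by
  by_contra hne
  rw [not_eventually] at hne
  have hK : IsCompact (Icc 0 (m : Sd) \ {(n : Sd)}) :=
    isCompact_Icc.diff (ENat.isOpen_singleton (ENat.natCast_ne_top n))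
  obtain ⟨k, hk, hclus⟩ := hK.exists_mapClusterPt_of_frequently (hne.mono fun s hs =>
    ⟨⟨zero_le, not_lt.mp (not_or.mp hs).2⟩, (not_or.mp hs).1⟩)
  have hk' : k ∈ ({(n : Sd), ⊤} : Set Sd) := h ▸ hclus
  rcases hk' with rfl | rfl
  · exact hk.2 rfl
  · exact absurd hk.1.2 (by simp)

lemma Rm_rightLim (hx : memBbE T x) (ht : t ∈ Ico 0 T) :
    rightLim T (Rm T m x) t (Rm T m x t) := by
  suffices h : ∀ᶠ s in rf T t, Rm T m x s = Rm T m x t from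
    tendsto_const_nhds.congr' (h.mono fun _ hs => hs.symm)
  have hsticky : ∀ n : ℕ, x t = n → (∀ᶠ s in rf T t, x s = n ∨ (m : Sd) < x s) →
      ∀ᶠ s in rf T t, Rm T m x s = Rm T m x t := by
    intro n hxt h
    rcases le_or_gt (n : Sd) m with hnm | hnm
    · rw [Rm_eq_self ht.1 (hxt ▸ hnm), hxt]
      exact eventually_Rm_eq_of_eventually_eq_or_lt hx ht.1 hxt (by exact_mod_cast hnm) h
    · exact eventually_Rm_eq_of_eventually_lt ht.1
        (h.mono fun s hs => hs.elim (fun h => h ▸ hnm) id)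
  rcases hx.1 t (Ico_subset_Icc_self ht) with htop | ⟨n, hlim, hxt⟩ | ⟨n, hpair, hxt⟩
  · exact eventually_Rm_eq_of_eventually_lt ht.1
      (ENat.tendsto_nhds_top_iff_natCast_lt.mp htop m)
  · exact hsticky n hxt
      ((eventually_eq_of_tendsto_ne_top (ENat.natCast_ne_top n) hlim).mono fun _ => Or.inl)
  · exact hsticky n hxt (eventually_eq_or_lt_of_softRightPair hpair)

lemma exists_lt_Rm_of_eq_top {y : ℝ → Sd} (hy : memE T y) (ht : t ∈ Icc 0 T) (htop : y t = ⊤)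
    (n : ℕ) : ∃ m : ℕ, n ≤ m ∧ (n : Sd) < Rm T m y t := by
  have ht0 : 0 < t := ht.1.lt_of_ne (by rintro rfl; exact hy.2.1 htop)
  obtain ⟨hσpos, hσtop, hσlim⟩ := hy.2.2 t ⟨ht0, ht.2⟩ htop
  have hex : ∃ s ∈ Icc 0 t, y s ≠ ⊤ := ⟨0, ⟨le_rfl, ht0.le⟩, hy.2.1⟩
  obtain ⟨η, hη, hgt⟩ := exists_forall_Ioo_of_eventually_lf
    (ENat.tendsto_nhds_top_iff_natCast_lt.mp hσlim n)
  -- a finite state visited within `η` before `σ_∞(t)`: all later visits to `S_M` are above `n`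
  obtain ⟨s₀, ⟨hs₀, hs₀top⟩, hs₀gt⟩ := exists_lt_of_lt_csSup hex
    (sub_lt_self (sigmaInf y t) (lt_min hη hσpos))
  set M := max n (y s₀).toNat
  have hys₀ : y s₀ ≤ M := by
    rw [← ENat.natCast_toNat hs₀top]
    exact_mod_cast le_max_right _ _
  refine ⟨M, le_max_left _ _, (ENat.add_one_le_iff (ENat.natCast_ne_top n)).mp ?_⟩
  refine (srec_mem_of_visits_mem (C := Icc ((n : Sd) + 1) M) hy.1.2 ht.2 hs₀.1 isCompact_Icc
    (by simp) ⟨s₀, ⟨le_rfl, hs₀.2⟩, hys₀⟩ fun u hu hyu => ⟨?_, hyu⟩).1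
  have hutop : y u ≠ ⊤ := ne_top_of_le_ne_top (ENat.natCast_ne_top M) hyu
  have huσ : u < sigmaInf y t :=
    (le_lastVisit ⟨hs₀.1.trans hu.1, hu.2⟩ hutop).lt_of_ne fun h => hutop (h ▸ hσtop)
  have := hgt u ⟨hs₀.1.trans hu.1, hu.2.trans ht.2⟩
    ⟨by linarith [min_le_left η (sigmaInf y t), hu.1], huσ⟩
  exact (ENat.add_one_le_iff (ENat.natCast_ne_top n)).mpr this

lemma eq_of_forall_Rm_eq {y : ℝ → Sd} (hx : memE T x) (ht : t ∈ Icc 0 T) (hyt : y t ≠ ⊤)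
    (h : ∀ m, Rm T m x t = Rm T m y t) : x t = y t := by
  obtain ⟨n, hn⟩ : ∃ n : ℕ, (n : Sd) = y t := ⟨(y t).toNat, ENat.natCast_toNat hyt⟩
  by_cases hxt : x t = ⊤
  · obtain ⟨m, hnm, hlt⟩ := exists_lt_Rm_of_eq_top hx ht hxt n
    rw [h m, Rm_eq_self ht.1 (by rw [← hn]; exact_mod_cast hnm), ← hn] at hlt
    exact (lt_irrefl _ hlt).elim
  · set M := max n (x t).toNat
    have hxM : x t ≤ M := by
      rw [← ENat.natCast_toNat hxt]
      exact_mod_cast le_max_right _ _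
    have hyM : y t ≤ M := by
      rw [← hn]
      exact_mod_cast le_max_left _ _
    rw [← Rm_eq_self (T := T) ht.1 hxM, h M, Rm_eq_self ht.1 hyM]

lemma eqOn_of_forall_Rm_eqOn {y : ℝ → Sd} (hx : memE T x) (hy : memE T y)
    (h : ∀ m, EqOn (Rm T m x) (Rm T m y) (Icc 0 T)) : EqOn x y (Icc 0 T) := by
  intro t ht
  by_cases hyt : y t = ⊤
  · by_cases hxt : x t = ⊤
    · rw [hxt, hyt]
    · exact (eq_of_forall_Rm_eq hy ht hxt fun m => (h m ht).symm).symm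
  · exact eq_of_forall_Rm_eq hx ht hyt fun m => h m ht

end RecordProcess

section SoftMetric

variable {T : ℝ}

lemma summable_dE (hT : 0 ≤ T) (x y : ℝ → Sd) :
    Summable fun m : ℕ => (1 / 2 : ℝ) ^ (m + 1) * dS T (Rm T m x) (Rm T m y) :=
  Summable.of_nonneg_of_le (fun m => mul_nonneg (by positivity) (dS_nonneg hT _ _))
    (fun m => mul_le_of_le_one_right (by positivity) (dS_le_one hT _ _))
    ((summable_nat_add_iff 1).mpr summable_geometric_two)

lemma dE_nonneg (hT : 0 ≤ T) (x y : ℝ → Sd) : 0 ≤ dE T x y :=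
  tsum_nonneg fun m => mul_nonneg (by positivity) (dS_nonneg hT _ _)

lemma dE_comm (hT : 0 ≤ T) (x y : ℝ → Sd) : dE T x y = dE T y x := by
  simp only [dE, dS_comm hT (Rm T _ x)]

lemma dE_triangle (hT : 0 ≤ T) (x y z : ℝ → Sd) : dE T x z ≤ dE T x y + dE T y z := by
  rw [dE, dE, dE, ← (summable_dE hT x y).tsum_add (summable_dE hT y z)]
  refine (summable_dE hT x z).tsum_le_tsum (fun m => ?_)
    ((summable_dE hT x y).add (summable_dE hT y z))
  rw [← mul_add]
  exact mul_le_mul_of_nonneg_left (dS_triangle hT _ _ _) (by positivity)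

lemma dE_eq_zero_iff (hT : 0 ≤ T) (x y : ℝ → Sd) :
    dE T x y = 0 ↔ ∀ m, dS T (Rm T m x) (Rm T m y) = 0 := by
  rw [dE, ← (summable_dE hT x y).hasSum_iff,
    hasSum_zero_iff_of_nonneg fun m => mul_nonneg (by positivity) (dS_nonneg hT _ _), funext_iff]
  simp

end SoftMetric

end Soft

open Soft Filter Topology in
/-- `d(x,y) = Σ_m 2^{-(m+1)} d_S(R_m x, R_m y)` is a metric on `E([0,T], S_d)`:
nonnegative, symmetric, satisfying the triangle inequality, and vanishing exactly on
equal trajectories. -/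
theorem stmt9 (T : ℝ) (hT : 0 < T) :
    (∀ x y : ℝ → Soft.Sd, Soft.memE T x → Soft.memE T y → 0 ≤ Soft.dE T x y) ∧
    (∀ x y : ℝ → Soft.Sd, Soft.memE T x → Soft.memE T y →
      Soft.dE T x y = Soft.dE T y x) ∧
    (∀ x y z : ℝ → Soft.Sd, Soft.memE T x → Soft.memE T y → Soft.memE T z →
      Soft.dE T x z ≤ Soft.dE T x y + Soft.dE T y z) ∧
    (∀ x y : ℝ → Soft.Sd, Soft.memE T x → Soft.memE T y →
      (Soft.dE T x y = 0 ↔ Set.EqOn x y (Set.Icc 0 T))) := by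
  refine ⟨fun x y _ _ => dE_nonneg hT.le x y, fun x y _ _ => dE_comm hT.le x y,
    fun x y z _ _ _ => dE_triangle hT.le x y z, fun x y hx hy => ?_⟩
  rw [dE_eq_zero_iff hT.le]
  constructor
  · intro h
    exact eqOn_of_forall_Rm_eqOn hx hy fun m => eqOn_of_dS_eq_zero hT
      (fun t ht => Rm_le hx.1 ht) (fun t ht => Rm_le hy.1 ht)
      (fun t ht => Rm_rightLim hx.1 ht) (fun t ht => Rm_rightLim hy.1 ht) (h m)
  · intro h m
    exact dS_eq_zero_of_eqOn hT.le fun t ht => srec_congr ht h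
end
end
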